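/- Modulo 64, f_2^8/f_1^{16} ≡ 21 + 12·φ(-q)^2 + 16·φ(q^2) + 16·φ(q^4) (mod 64) in ℤ[[q]], where φ(q) = ∑_{n∈ℤ} q^{n^2} and f_m = ∏_{n≥1}(1 - q^{mn}). -/

import Mathlib

/-!
Gauss's identity `f₁² = f₂ φ(-q)` turns the left-hand side into `φ(-q)⁻⁸`. Since `φ(q) = 1 + 2S`,
we have `φ(-q) = 1 + 2T` with `T ≡ S (mod 2)`, and the Frobenius congruence `A(q)² ≡ A(q²) (mod 2)`
gives `16 φ(q²) ≡ 16 + 32 T²` and `16 φ(q⁴) ≡ 16 + 32 T⁴ (mod 64)`. Writing `(1 + 2T)² = 1 + 4u`,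
the right-hand side is then `≡ 1 - 16u + 32u² (mod 64)`, the inverse of `(1 + 4u)⁴ = φ(-q)⁸`.

Gauss's identity comes from the finite Jacobi triple product at `z = 1`,
`∑ₖ x^{k²} [a+b, b+k]_{x²} = (-x; x²)_a (-x; x²)_b`, proved by induction on `a` with the q-Pascal
rule and specialised to `x = -q`, `a = b = n`: modulo `q^{n+1}` each `[2n, n+k]_{q²} (q²; q²)_n²`
may be replaced by `(q²; q²)_{2n}`, and the partial products by the infinite ones.
-/

open PowerSeries
open scoped Classical

/-- `f m = ∏_{n ≥ 1} (1 - q^{m n})` in `ℤ[[q]]`, defined coefficientwise via the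
stabilizing partial products (factors with `k > n` do not affect the coefficient of `q^n`). -/
noncomputable def f (m : ℕ) : PowerSeries ℤ :=
  PowerSeries.mk fun n =>
    PowerSeries.coeff n (∏ k ∈ Finset.Icc 1 n, (1 - (PowerSeries.X : PowerSeries ℤ) ^ (m * k)))

/-- Ramanujan's theta function `φ(q) = ∑_{n ∈ ℤ} q^{n^2} = 1 + 2 ∑_{n ≥ 1} q^{n^2}`. -/
noncomputable def phi : PowerSeries ℤ :=
  PowerSeries.mk fun n => if n = 0 then 1 else if IsSquare n then 2 else 0

/-- Ramanujan's theta function `ψ(q) = ∑_{n ≥ 0} q^{n(n+1)/2}`. -/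
noncomputable def psi : PowerSeries ℤ :=
  PowerSeries.mk fun n => if ∃ k, k * (k + 1) = 2 * n then 1 else 0

/-- Substitution `q ↦ q^j` on formal power series. -/
noncomputable def substPow (j : ℕ) (F : PowerSeries ℤ) : PowerSeries ℤ :=
  PowerSeries.mk fun n => if j ∣ n then PowerSeries.coeff (n / j) F else 0

/-- `F(-q)`. -/
noncomputable def neg_q (F : PowerSeries ℤ) : PowerSeries ℤ :=
  PowerSeries.rescale (-1 : ℤ) F

/-- `bt n` : the number of overcubic partition triples of `n`, via the generating
function `∑ bt(n) q^n = f_4^3 / (f_1^6 f_2^3)`. -/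
noncomputable def bt (n : ℕ) : ℤ :=
  PowerSeries.coeff n (f 4 ^ 3 * Ring.inverse (f 1) ^ 6 * Ring.inverse (f 2) ^ 3)

section QPochhammer

variable {R : Type*} [CommRing R]

/-- The q-Pochhammer symbol `(a; y)_n`. -/
def qPochhammer (a y : R) (n : ℕ) : R := ∏ i ∈ Finset.range n, (1 - a * y ^ i)

@[simp]
theorem qPochhammer_zero (a y : R) : qPochhammer a y 0 = 1 := Finset.prod_range_zero _

theorem qPochhammer_succ (a y : R) (n : ℕ) :
    qPochhammer a y (n + 1) = qPochhammer a y n * (1 - a * y ^ n) :=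
  Finset.prod_range_succ _ _

theorem SModEq.mul_left_span {x y d : R} (c : R) (h : x ≡ y [SMOD Ideal.span {d}]) :
    c * x ≡ c * y [SMOD Ideal.span {c * d}] := by
  rw [SModEq.sub_mem, Ideal.mem_span_singleton] at h ⊢
  rw [← mul_sub]
  exact mul_dvd_mul_left c h

theorem qPochhammer_smodEq (a y : R) {L L' : ℕ} (h : L ≤ L') :
    qPochhammer a y L' ≡ qPochhammer a y L [SMOD Ideal.span {a * y ^ L}] := by
  induction L', h using Nat.le_induction with
  | base => rfl
  | succ L' hL ih =>
    have hfactor : 1 - a * y ^ L' ≡ 1 [SMOD Ideal.span {a * y ^ L}] := by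
      rw [SModEq.sub_mem, sub_sub_cancel_left, neg_mem_iff, Ideal.mem_span_singleton]
      exact mul_dvd_mul_left a (pow_dvd_pow y hL)
    simpa [qPochhammer_succ] using ih.mul hfactor

end QPochhammer

section GaussianBinomial

variable {R : Type*} [CommRing R] (y : R)

/-- The Gaussian binomial coefficient `[n, k]_y`, extended by zero to all `k : ℤ`; the exponent
`k.toNat` only matters for `k ≥ 0`, since otherwise `[n, k]_y = 0`. -/
def gaussBinom : ℕ → ℤ → R
  | 0, k => if k = 0 then 1 else 0
  | n + 1, k => gaussBinom n (k - 1) + y ^ k.toNat * gaussBinom n k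

theorem gaussBinom_succ (n : ℕ) (k : ℤ) :
    gaussBinom y (n + 1) k = gaussBinom y n (k - 1) + y ^ k.toNat * gaussBinom y n k := rfl

theorem gaussBinom_of_neg : ∀ (n : ℕ) {k : ℤ}, k < 0 → gaussBinom y n k = 0
  | 0, _, hk => if_neg hk.ne
  | n + 1, _, hk => by
    rw [gaussBinom_succ, gaussBinom_of_neg n (by omega), gaussBinom_of_neg n hk, mul_zero,
      add_zero]

theorem gaussBinom_of_lt : ∀ (n : ℕ) {k : ℤ}, n < k → gaussBinom y n k = 0
  | 0, _, hk => if_neg (by omega)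
  | n + 1, _, hk => by
    rw [gaussBinom_succ, gaussBinom_of_lt n (by omega), gaussBinom_of_lt n (by omega), mul_zero,
      add_zero]

theorem gaussBinom_zero_right : ∀ n : ℕ, gaussBinom y n 0 = 1
  | 0 => if_pos rfl
  | n + 1 => by
    rw [gaussBinom_succ, gaussBinom_of_neg y n (by omega), gaussBinom_zero_right n]
    simp

theorem gaussBinom_self : ∀ n : ℕ, gaussBinom y n n = 1
  | 0 => if_pos rfl
  | n + 1 => by
    rw [gaussBinom_succ, gaussBinom_of_lt y n (k := (n + 1 : ℕ)) (by omega), mul_zero, add_zero]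
    simpa using gaussBinom_self n

theorem gaussBinom_succ' : ∀ (n : ℕ) (k : ℤ),
    gaussBinom y (n + 1) k = y ^ (n + 1 - k).toNat * gaussBinom y n (k - 1) + gaussBinom y n k
  | 0, k => by
    simp only [gaussBinom]
    rcases eq_or_ne k 0 with rfl | hk
    · simp
    · rcases eq_or_ne k 1 with rfl | hk1
      · simp
      · simp [hk, sub_eq_zero, hk1]
  | n + 1, k => by
    have hmid : y ^ k.toNat * y ^ (n + 1 - k).toNat * gaussBinom y n (k - 1)
        = y ^ (n + 2 - k).toNat * y ^ (k - 1).toNat * gaussBinom y n (k - 1) := by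
      by_cases hk : 1 ≤ k ∧ k ≤ n + 1
      · rw [← pow_add, ← pow_add]
        congr 2
        omega
      · rcases not_and_or.mp hk with hk | hk
        · rw [gaussBinom_of_neg y n (by omega)]
          ring
        · rw [gaussBinom_of_lt y n (by omega)]
          ring
    have e1 := gaussBinom_succ' n (k - 1)
    have e2 := gaussBinom_succ' n k
    rw [show (n : ℤ) + 1 - (k - 1) = n + 2 - k by ring] at e1
    have f1 := gaussBinom_succ y n (k - 1)
    have f2 := gaussBinom_succ y n k
    rw [gaussBinom_succ y (n + 1) k, show ((n + 1 : ℕ) : ℤ) + 1 - k = n + 2 - k by push_cast; ring]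
    linear_combination e1 + y ^ k.toNat * e2 - y ^ (n + 2 - k).toNat * f1 - f2 + hmid

theorem gaussBinom_symm : ∀ (n : ℕ) (k : ℤ), gaussBinom y n k = gaussBinom y n (n - k)
  | 0, k => by simp [gaussBinom]
  | n + 1, k => by
    rw [gaussBinom_succ' y n, gaussBinom_succ]
    push_cast
    rw [gaussBinom_symm n (n + 1 - k - 1), gaussBinom_symm n (n + 1 - k)]
    ring_nf

theorem gaussBinom_mul_qPochhammer : ∀ a b : ℕ,
    gaussBinom y (a + b) a * qPochhammer y y a * qPochhammer y y b = qPochhammer y y (a + b)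
  | 0, b => by simp [gaussBinom_zero_right]
  | a + 1, 0 => by rw [add_zero, gaussBinom_self, one_mul, qPochhammer_zero, mul_one]
  | a + 1, b + 1 => by
    have h1 := gaussBinom_mul_qPochhammer a (b + 1)
    have h2 := gaussBinom_mul_qPochhammer (a + 1) b
    rw [show a + (b + 1) = a + b + 1 by ring, qPochhammer_succ y y b] at h1
    rw [show a + 1 + b = a + b + 1 by ring, qPochhammer_succ y y a] at h2
    push_cast at h2
    rw [show a + 1 + (b + 1) = a + b + 1 + 1 by ring, gaussBinom_succ, qPochhammer_succ y y a,
      qPochhammer_succ y y b, qPochhammer_succ y y (a + b + 1)]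
    push_cast
    rw [add_sub_cancel_right, show ((a : ℤ) + 1).toNat = a + 1 by omega]
    linear_combination (1 - y * y ^ a) * h1 + y ^ (a + 1) * (1 - y * y ^ b) * h2

end GaussianBinomial

section FiniteJacobi

variable {R : Type*} [CommRing R] (x : R)

/-- The `k`-th term of the finite Jacobi triple product at `z = 1`. -/
def jacobiTerm (a b : ℕ) (k : ℤ) : R := x ^ (k.natAbs ^ 2) * gaussBinom (x ^ 2) (a + b) (b + k)

theorem jacobiTerm_eq_zero {a b : ℕ} {k : ℤ} (hk : k ∉ Set.Icc (-(b : ℤ)) a) :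
    jacobiTerm x a b k = 0 := by
  rw [Set.mem_Icc, not_and_or, not_le, not_le] at hk
  rw [jacobiTerm]
  rcases hk with hk | hk
  · rw [gaussBinom_of_neg _ _ (by omega), mul_zero]
  · rw [gaussBinom_of_lt _ _ (by push_cast; omega), mul_zero]

theorem hasFiniteSupport_jacobiTerm (a b : ℕ) : (jacobiTerm x a b).HasFiniteSupport :=
  (Set.finite_Icc (-(b : ℤ)) a).subset fun _ hk => by_contra fun h => hk (jacobiTerm_eq_zero x h)

theorem jacobiTerm_comm (a b : ℕ) (k : ℤ) : jacobiTerm x a b k = jacobiTerm x b a (-k) := by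
  rw [jacobiTerm, jacobiTerm, gaussBinom_symm, Int.natAbs_neg, add_comm b a]
  push_cast
  ring_nf

theorem jacobiTerm_succ_left (a b : ℕ) (k : ℤ) :
    jacobiTerm x (a + 1) b k = jacobiTerm x a b k + x ^ (2 * a + 1) * jacobiTerm x a b (k - 1) := by
  rw [jacobiTerm, jacobiTerm, jacobiTerm, show a + 1 + b = a + b + 1 by ring, gaussBinom_succ',
    ← add_sub_assoc]
  by_cases hk : k ≤ a + 1
  · have hexp : k.natAbs ^ 2 + 2 * ((a + b : ℕ) + 1 - (b + k)).toNat
        = 2 * a + 1 + (k - 1).natAbs ^ 2 := by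
      zify
      rw [Int.toNat_of_nonneg (by omega), sq_abs, sq_abs]
      ring
    rw [← pow_mul, mul_add, ← mul_assoc, ← pow_add, hexp, pow_add]
    ring
  · rw [gaussBinom_of_lt _ _ (by push_cast; omega)]
    ring

theorem finsum_jacobiTerm_comm (a b : ℕ) :
    ∑ᶠ k, jacobiTerm x a b k = ∑ᶠ k, jacobiTerm x b a k := by
  simp_rw [jacobiTerm_comm x a b]
  exact finsum_comp_equiv (Equiv.neg ℤ)

theorem finsum_jacobiTerm_succ_left (a b : ℕ) :
    ∑ᶠ k, jacobiTerm x (a + 1) b k = (1 + x ^ (2 * a + 1)) * ∑ᶠ k, jacobiTerm x a b k := by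
  have hfin := hasFiniteSupport_jacobiTerm x a b
  have hshift : (fun k => jacobiTerm x a b (k - 1)).HasFiniteSupport :=
    hfin.fun_comp_of_injective (sub_left_injective (b := 1))
  have hsum_shift : ∑ᶠ k, jacobiTerm x a b (k - 1) = ∑ᶠ k, jacobiTerm x a b k :=
    finsum_comp_equiv (Equiv.subRight 1)
  simp_rw [jacobiTerm_succ_left]
  rw [finsum_add_distrib hfin (hshift.fun_mul_right _), ← mul_finsum' _ _ hshift, hsum_shift]
  ring

theorem finsum_jacobiTerm (a b : ℕ) :
    ∑ᶠ k, jacobiTerm x a b k = qPochhammer (-x) (x ^ 2) a * qPochhammer (-x) (x ^ 2) b := by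
  have hleft (a b : ℕ) :
      ∑ᶠ k, jacobiTerm x a b k = qPochhammer (-x) (x ^ 2) a * ∑ᶠ k, jacobiTerm x 0 b k := by
    induction a with
    | zero => simp
    | succ a ih =>
      rw [finsum_jacobiTerm_succ_left, ih, qPochhammer_succ]
      ring
  have hzero : ∑ᶠ k, jacobiTerm x 0 0 k = 1 := by
    rw [finsum_eq_single _ 0 fun k hk => jacobiTerm_eq_zero x (by simpa using hk)]
    simp [jacobiTerm, gaussBinom]
  rw [hleft, finsum_jacobiTerm_comm, hleft, hzero, mul_one]

theorem qPochhammer_neg_mul_qPochhammer_sq (n : ℕ) :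
    qPochhammer (-x) (x ^ 2) n * qPochhammer (x ^ 2) (x ^ 2) n = qPochhammer (-x) (-x) (2 * n) := by
  induction n with
  | zero => simp
  | succ n ih =>
    rw [show 2 * (n + 1) = 2 * n + 1 + 1 by ring, qPochhammer_succ, qPochhammer_succ,
      qPochhammer_succ, qPochhammer_succ, ← ih, pow_succ (-x) (2 * n), pow_mul, neg_sq]
    ring

theorem sq_qPochhammer_eq_sum (n : ℕ) :
    qPochhammer (-x) (-x) (2 * n) ^ 2 = ∑ k ∈ Finset.Icc (-(n : ℤ)) n, x ^ (k.natAbs ^ 2) *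
      (gaussBinom (x ^ 2) (2 * n) (n + k) * qPochhammer (x ^ 2) (x ^ 2) n ^ 2) := by
  rw [← qPochhammer_neg_mul_qPochhammer_sq, mul_pow, sq (qPochhammer (-x) _ _),
    ← finsum_jacobiTerm, finsum_eq_sum_of_support_subset _ (s := Finset.Icc (-(n : ℤ)) n),
    Finset.sum_mul]
  · simp only [jacobiTerm, ← two_mul, mul_assoc]
  · intro k hk
    by_contra h
    exact hk (jacobiTerm_eq_zero x (by simpa using h))

end FiniteJacobi

namespace PowerSeries

theorem smodEq_X_pow_iff {R : Type*} [CommRing R] {A B : R⟦X⟧} {N : ℕ} :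
    A ≡ B [SMOD Ideal.span {X ^ N}] ↔ ∀ i < N, coeff i A = coeff i B := by
  simp only [SModEq.sub_mem, Ideal.mem_span_singleton, X_pow_dvd_iff, map_sub, sub_eq_zero]

theorem rescale_smodEq {R : Type*} [CommRing R] {A B : R⟦X⟧} {N : ℕ} (a : R)
    (h : A ≡ B [SMOD Ideal.span {X ^ N}]) : rescale a A ≡ rescale a B [SMOD Ideal.span {X ^ N}] :=
  smodEq_X_pow_iff.mpr fun i hi => by rw [coeff_rescale, coeff_rescale, smodEq_X_pow_iff.mp h i hi]

theorem mem_span_natCast_of_map_eq_zero {p : ℕ} {D : ℤ⟦X⟧}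
    (h : map (Int.castRingHom (ZMod p)) D = 0) : D ∈ Ideal.span {(p : ℤ⟦X⟧)} := by
  have hdvd (i : ℕ) : (p : ℤ) ∣ coeff i D := by
    rw [← ZMod.intCast_zmod_eq_zero_iff_dvd, ← eq_intCast (Int.castRingHom (ZMod p)), ← coeff_map,
      h, map_zero]
  refine Ideal.mem_span_singleton'.mpr ⟨mk fun i => coeff i D / p, ext fun i => ?_⟩
  rw [← map_natCast (C (R := ℤ)), coeff_mul_C, coeff_mk, Int.ediv_mul_cancel (hdvd i)]

theorem dvd_coeff_sub_of_smodEq {A B : ℤ⟦X⟧} {m : ℕ}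
    (h : A ≡ B [SMOD Ideal.span {(m : ℤ⟦X⟧)}]) (n : ℕ) : (m : ℤ) ∣ coeff n (A - B) := by
  obtain ⟨W, hW⟩ := Ideal.mem_span_singleton'.mp (SModEq.sub_mem.mp h)
  rw [← hW, ← map_natCast (C (R := ℤ)), coeff_mul_C]
  exact dvd_mul_left _ _

theorem smodEq_two_of_map_eq {A B : ℤ⟦X⟧}
    (h : map (Int.castRingHom (ZMod 2)) A = map (Int.castRingHom (ZMod 2)) B) :
    A ≡ B [SMOD Ideal.span {2}] := by
  rw [SModEq.sub_mem]
  exact_mod_cast mem_span_natCast_of_map_eq_zero (p := 2) (by rw [map_sub, h, sub_self])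

theorem sq_smodEq_expand (A : ℤ⟦X⟧) : A ^ 2 ≡ expand 2 two_ne_zero A [SMOD Ideal.span {2}] := by
  refine smodEq_two_of_map_eq ?_
  rw [map_pow, map_expand, ← MvPowerSeries.map_frobenius_expand 2 two_ne_zero,
    ZMod.frobenius_zmod, MvPowerSeries.map_id]
  rfl

theorem rescale_neg_one_smodEq (A : ℤ⟦X⟧) : rescale (-1) A ≡ A [SMOD Ideal.span {2}] := by
  refine smodEq_two_of_map_eq ?_
  rw [← rescale_map, map_neg, map_one, show (-1 : ZMod 2) = 1 from rfl, rescale_one,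
    RingHom.id_apply]

end PowerSeries

theorem coeff_f (m n : ℕ) : coeff n (f m) = coeff n (qPochhammer (X ^ m) (X ^ m) n) := by
  have hprod (L : ℕ) :
      ∏ k ∈ Finset.Icc 1 L, (1 - (X : ℤ⟦X⟧) ^ (m * k)) = qPochhammer (X ^ m) (X ^ m) L := by
    induction L with
    | zero => simp
    | succ L ih =>
      rw [Finset.prod_Icc_succ_top (by omega), ih, qPochhammer_succ]
      ring
  rw [f, coeff_mk, hprod]

theorem f_smodEq_qPochhammer {m N L : ℕ} (hm : m ≠ 0) (hN : N ≤ L + 1) :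
    f m ≡ qPochhammer (X ^ m) (X ^ m) L [SMOD Ideal.span {X ^ N}] := by
  refine smodEq_X_pow_iff.mpr fun i hi => ?_
  have hstable := qPochhammer_smodEq (X ^ m : ℤ⟦X⟧) (X ^ m) (show i ≤ L by omega)
  rw [← pow_succ', ← pow_mul] at hstable
  rw [coeff_f, smodEq_X_pow_iff.mp (hstable.mono (Ideal.span_singleton_le_span_singleton.mpr
    (pow_dvd_pow X (Nat.le_mul_of_pos_left _ (Nat.pos_of_ne_zero hm))))) i i.lt_succ_self]

theorem isUnit_f (m : ℕ) : IsUnit (f m) := by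
  rw [isUnit_iff_constantCoeff, ← coeff_zero_eq_constantCoeff_apply, coeff_f]
  simp

theorem card_filter_natAbs_sq_eq {i n : ℕ} (hi : i ≤ n) :
    ((Finset.Icc (-(n : ℤ)) n).filter (fun k => i = k.natAbs ^ 2)).card
      = if i = 0 then 1 else if IsSquare i then 2 else 0 := by
  split_ifs with h0 hsq
  · subst h0
    rw [Finset.card_eq_one]
    refine ⟨0, Finset.ext fun k => ?_⟩
    simp [eq_comm (a := 0)]
    omega
  · obtain ⟨r, rfl⟩ := hsq
    have hr : r ≤ r * r := Nat.le_mul_self r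
    have hr0 : r ≠ 0 := by
      rintro rfl
      simp at h0
    rw [Finset.card_eq_two]
    refine ⟨r, -r, by omega, Finset.ext fun k => ?_⟩
    simp only [Finset.mem_filter, Finset.mem_Icc, Finset.mem_insert, Finset.mem_singleton, sq,
      Nat.mul_self_inj, eq_comm (a := r), Int.natAbs_eq_iff]
    omega
  · rw [Finset.card_eq_zero, Finset.filter_eq_empty_iff]
    rintro k - rfl
    exact hsq ⟨k.natAbs, sq _⟩

theorem phi_smodEq_sum (n : ℕ) :
    phi ≡ ∑ k ∈ Finset.Icc (-(n : ℤ)) n, X ^ (k.natAbs ^ 2) [SMOD Ideal.span {X ^ (n + 1)}] := by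
  refine smodEq_X_pow_iff.mpr fun i hi => ?_
  simp only [phi, coeff_mk, map_sum, coeff_X_pow, Finset.sum_boole,
    card_filter_natAbs_sq_eq (Nat.le_of_lt_succ hi)]
  split_ifs <;> rfl

theorem neg_q_phi_smodEq_sum (n : ℕ) :
    neg_q phi ≡ ∑ k ∈ Finset.Icc (-(n : ℤ)) n, (-X) ^ (k.natAbs ^ 2)
      [SMOD Ideal.span {X ^ (n + 1)}] := by
  simpa [neg_q, rescale_X] using rescale_smodEq (-1) (phi_smodEq_sum n)

theorem gaussBinom_mul_sq_smodEq {n : ℕ} {k : ℤ} (hk : k ∈ Finset.Icc (-(n : ℤ)) n) :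
    (-X) ^ (k.natAbs ^ 2) * (gaussBinom (X ^ 2) (2 * n) (n + k) * qPochhammer (X ^ 2) (X ^ 2) n ^ 2)
      ≡ (-X) ^ (k.natAbs ^ 2) * qPochhammer (X ^ 2 : ℤ⟦X⟧) (X ^ 2) (2 * n)
      [SMOD Ideal.span {X ^ (n + 1)}] := by
  rw [Finset.mem_Icc] at hk
  set y : ℤ⟦X⟧ := X ^ 2
  obtain ⟨a, ha⟩ : ∃ a : ℕ, (a : ℤ) = n + k := ⟨(n + k).toNat, by omega⟩
  obtain ⟨b, hb⟩ : ∃ b : ℕ, (b : ℤ) = n - k := ⟨(n - k).toNat, by omega⟩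
  -- `(y; y)_n` agrees with `(y; y)_{n ± k}` below `y^{L+1}`, and the factor `X^{k²}` pushes the
  -- error beyond `X^{n+1}`.
  set L := n - k.natAbs
  have hna := (qPochhammer_smodEq y y (show L ≤ n by omega)).trans
    (qPochhammer_smodEq y y (show L ≤ a by omega)).symm
  have hnb := (qPochhammer_smodEq y y (show L ≤ n by omega)).trans
    (qPochhammer_smodEq y y (show L ≤ b by omega)).symm
  have hkey : gaussBinom y (2 * n) (n + k) * qPochhammer y y n ^ 2
      ≡ qPochhammer y y (2 * n) [SMOD Ideal.span {y * y ^ L}] := by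
    rw [← ha, show 2 * n = a + b by omega, ← gaussBinom_mul_qPochhammer, sq, ← mul_assoc]
    exact (SModEq.rfl.mul hna).mul hnb
  refine (hkey.mul_left_span _).mono (Ideal.span_singleton_le_span_singleton.mpr ?_)
  have hk2 : k.natAbs ≤ k.natAbs ^ 2 := Nat.le_self_pow two_ne_zero _
  rw [neg_pow, mul_assoc, ← pow_succ', ← pow_mul, ← pow_add]
  exact Dvd.dvd.mul_left (pow_dvd_pow X (by omega)) _

theorem f_one_sq : f 1 ^ 2 = f 2 * neg_q phi := by
  ext n
  refine smodEq_X_pow_iff.mp ?_ n n.lt_succ_self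
  have hf₁ : f 1 ≡ qPochhammer X X (2 * n) [SMOD Ideal.span {X ^ (n + 1)}] := by
    simpa using f_smodEq_qPochhammer one_ne_zero (by omega : n + 1 ≤ 2 * n + 1)
  calc f 1 ^ 2 ≡ qPochhammer X X (2 * n) ^ 2 [SMOD Ideal.span {X ^ (n + 1)}] := hf₁.pow 2
    _ = ∑ k ∈ Finset.Icc (-(n : ℤ)) n, (-X) ^ (k.natAbs ^ 2) *
          (gaussBinom (X ^ 2) (2 * n) (n + k) * qPochhammer (X ^ 2) (X ^ 2) n ^ 2) := by
        simpa using sq_qPochhammer_eq_sum (-X : ℤ⟦X⟧) n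
    _ ≡ ∑ k ∈ Finset.Icc (-(n : ℤ)) n, (-X) ^ (k.natAbs ^ 2) * qPochhammer (X ^ 2) (X ^ 2) (2 * n)
        [SMOD Ideal.span {X ^ (n + 1)}] := SModEq.sum fun k hk => gaussBinom_mul_sq_smodEq hk
    _ = (∑ k ∈ Finset.Icc (-(n : ℤ)) n, (-X) ^ (k.natAbs ^ 2)) *
          qPochhammer (X ^ 2) (X ^ 2) (2 * n) := (Finset.sum_mul ..).symm
    _ ≡ neg_q phi * f 2 [SMOD Ideal.span {X ^ (n + 1)}] :=
        (neg_q_phi_smodEq_sum n).symm.mul (f_smodEq_qPochhammer two_ne_zero (by omega)).symm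
    _ = f 2 * neg_q phi := mul_comm _ _

theorem mul_pow_eight_eq_one_of_sixtyFour_eq_zero {R : Type*} [CommRing R] (h64 : (64 : R) = 0)
    {T s₂ s₄ : R} (h₂ : 32 * s₂ = 32 * T ^ 2) (h₄ : 32 * s₄ = 32 * T ^ 4) :
    (21 + 12 * (1 + 2 * T) ^ 2 + 16 * (1 + 2 * s₂) + 16 * (1 + 2 * s₄)) * (1 + 2 * T) ^ 8 = 1 := by
  set u := T + T ^ 2
  have hinv : (1 + 4 * u) ^ 4 * (1 - 16 * u + 32 * u ^ 2) = 1 := by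
    linear_combination (-2 * u ^ 2 - 12 * u ^ 3 - 12 * u ^ 4 + 64 * u ^ 5 + 128 * u ^ 6) * h64
  have hG : 21 + 12 * (1 + 2 * T) ^ 2 + 16 * (1 + 2 * s₂) + 16 * (1 + 2 * s₄)
      = 1 - 16 * u + 32 * u ^ 2 := by
    linear_combination h₂ + h₄ + (1 + T + T ^ 2 - T ^ 3) * h64
  rw [hG, show (1 + 2 * T) ^ 8 = (1 + 4 * u) ^ 4 by ring, mul_comm, hinv]

theorem theta_mul_pow_eight_smodEq_one {F : ℤ⟦X⟧} (hF : F ≡ 1 [SMOD Ideal.span {2}]) :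
    (21 + 12 * rescale (-1) F ^ 2 + 16 * expand 2 two_ne_zero F + 16 * expand 4 four_ne_zero F)
      * rescale (-1) F ^ 8 ≡ 1 [SMOD Ideal.span {64}] := by
  obtain ⟨S, rfl⟩ : ∃ S, F = 1 + 2 * S := by
    obtain ⟨S, hS⟩ := Ideal.mem_span_singleton'.mp (SModEq.sub_mem.mp hF)
    exact ⟨S, by rw [mul_comm, hS]; ring⟩
  set T := rescale (-1) S
  have h₂ : expand 2 two_ne_zero S ≡ T ^ 2 [SMOD Ideal.span {2}] :=
    (sq_smodEq_expand S).symm.trans ((rescale_neg_one_smodEq S).symm.pow 2)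
  have h₄ : expand 4 four_ne_zero S ≡ T ^ 4 [SMOD Ideal.span {2}] := by
    rw [show T ^ 4 = (T ^ 2) ^ 2 by ring,
      show expand 4 four_ne_zero S = _ from expand_mul 2 two_ne_zero 2 two_ne_zero S]
    exact (sq_smodEq_expand _).symm.trans (h₂.pow 2)
  have h32 {A B : ℤ⟦X⟧} (h : A ≡ B [SMOD Ideal.span {2}]) :
      32 * A ≡ 32 * B [SMOD Ideal.span {64}] := by
    simpa [show (32 : ℤ⟦X⟧) * 2 = 64 by norm_num] using h.mul_left_span 32
  rw [SModEq.idealQuotientMk]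
  simp only [map_add, map_mul, map_one, map_pow, map_ofNat]
  refine mul_pow_eight_eq_one_of_sixtyFour_eq_zero ?_ ?_ ?_
  · rw [← map_ofNat (Ideal.Quotient.mk _) 64, Ideal.Quotient.eq_zero_iff_mem]
    exact Ideal.mem_span_singleton_self _
  · simpa only [map_mul, map_pow, map_ofNat] using SModEq.idealQuotientMk.mp (h32 h₂)
  · simpa only [map_mul, map_pow, map_ofNat] using SModEq.idealQuotientMk.mp (h32 h₄)

theorem substPow_eq_expand {j : ℕ} (hj : j ≠ 0) (F : ℤ⟦X⟧) : substPow j F = expand j hj F := by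
  ext n
  rw [substPow, coeff_mk, coeff_expand]

theorem phi_smodEq_one : phi ≡ 1 [SMOD Ideal.span {2}] := by
  refine smodEq_two_of_map_eq (ext fun i => ?_)
  simp only [phi, coeff_map, coeff_mk, coeff_one]
  split_ifs <;> rfl

theorem stmt12 (n : ℕ) :
    (64 : ℤ) ∣ PowerSeries.coeff n
      (f 2 ^ 8 * Ring.inverse (f 1) ^ 16
        - (21 + 12 * (neg_q phi) ^ 2 + 16 * substPow 2 phi + 16 * substPow 4 phi)) := by
  refine dvd_coeff_sub_of_smodEq (m := 64) ?_ n
  rw [substPow_eq_expand two_ne_zero, substPow_eq_expand four_ne_zero]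
  set G := 21 + 12 * neg_q phi ^ 2 + 16 * expand 2 two_ne_zero phi + 16 * expand 4 four_ne_zero phi
  have htheta : G * neg_q phi ^ 8 ≡ 1 [SMOD Ideal.span {64}] :=
    theta_mul_pow_eight_smodEq_one phi_smodEq_one
  have hf₁ : f 1 * Ring.inverse (f 1) = 1 := Ring.mul_inverse_cancel _ (isUnit_f 1)
  calc f 2 ^ 8 * Ring.inverse (f 1) ^ 16
      = f 2 ^ 8 * Ring.inverse (f 1) ^ 16 * 1 := (mul_one _).symm
    _ ≡ f 2 ^ 8 * Ring.inverse (f 1) ^ 16 * (G * neg_q phi ^ 8) [SMOD Ideal.span {64}] :=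
        SModEq.rfl.mul htheta.symm
    _ = G * (f 1 * Ring.inverse (f 1)) ^ 16 := by
        rw [mul_pow, show f 1 ^ 16 = (f 2 * neg_q phi) ^ 8 by rw [← f_one_sq]; ring]
        ring
    _ = G := by rw [hf₁, one_pow, mul_one]
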